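/- Let Γ be a finite index set, let ρ : Γ → ℝ be nonnegative weights with ∑_{n∈Γ} ρ_n = 1, let μ_n, η_n (n ∈ Γ) and α be real parameters, and set μ̄ = ∑_n ρ_n μ_n, η̄ = ∑_n ρ_n η_n, assuming μ̄ > 0. Define, for each n ∈ Γ, F_n(x, y) = (μ_n x − η_n y − (x² + y²)(x − αy), μ_n y + η_n x − (x² + y²)(y + αx)), and let F̄(x,y) = ∑_n ρ_n F_n(x,y) (which equals the same expression with μ̄, η̄ in place of μ_n, η_n). Let Φ(θ) = (√μ̄·cos θ, √μ̄·sin θ) and R(θ) = (1/√μ̄)·(−sin θ − α cos θ, cos θ − α sin θ). Then for every n ∈ Γ and every θ ∈ ℝ, ⟨R(θ), F_n(Φ(θ)) − F̄(Φ(θ))⟩ = (η_n − η̄) − α(μ_n − μ̄) = ω_n − ω̄, where ω_n = η_n − α μ_n and ω̄ = η̄ − α μ̄. In particular the phase fluctuation function ℱ_n(θ) := ⟨R(θ), F_n(Φ(θ)) − F̄(Φ(θ))⟩ is constant in θ, so ℱ_n′ ≡ 0. -/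

import Mathlib

/-!
Writing `J` for the quarter turn `(x, y) ↦ (-y, x)`, the clock field is
`F_{μ,η}(v) = μ v + η J v - |v|² (v + α J v)`. Its cubic part does not depend on `(μ, η)`, so
`F_n - F̄ = (μ_n - μ̄) v + (η_n - η̄) J v` is linear, and on the limit cycle the phase response
curve satisfies `R · Φ = -α` and `R · J Φ = R · Φ' = 1`.
-/

open scoped RealInnerProductSpace

noncomputable section

def quarterTurn (v : EuclideanSpace ℝ (Fin 2)) : EuclideanSpace ℝ (Fin 2) := !₂[-v 1, v 0]

def radialIsochronField (μ η α : ℝ) (v : EuclideanSpace ℝ (Fin 2)) :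
    EuclideanSpace ℝ (Fin 2) :=
  !₂[μ * v 0 - η * v 1 - (v 0 ^ 2 + v 1 ^ 2) * (v 0 - α * v 1),
    μ * v 1 + η * v 0 - (v 0 ^ 2 + v 1 ^ 2) * (v 1 + α * v 0)]

theorem radialIsochronField_eq (μ η α : ℝ) (v : EuclideanSpace ℝ (Fin 2)) :
    radialIsochronField μ η α v =
      μ • v + η • quarterTurn v - (v 0 ^ 2 + v 1 ^ 2) • (v + α • quarterTurn v) := by
  ext i
  fin_cases i <;> simp [radialIsochronField, quarterTurn] <;> ring

theorem radialIsochronField_sub (μ η μ' η' α : ℝ) (v : EuclideanSpace ℝ (Fin 2)) :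
    radialIsochronField μ η α v - radialIsochronField μ' η' α v =
      (μ - μ') • v + (η - η') • quarterTurn v := by
  simp only [radialIsochronField_eq]
  module

theorem sum_smul_radialIsochronField {ι : Type*} (s : Finset ι) (ρ μ η : ι → ℝ) (α : ℝ)
    (hρ : ∑ n ∈ s, ρ n = 1) (v : EuclideanSpace ℝ (Fin 2)) :
    ∑ n ∈ s, ρ n • radialIsochronField (μ n) (η n) α v =
      radialIsochronField (∑ n ∈ s, ρ n * μ n) (∑ n ∈ s, ρ n * η n) α v := by
  simp only [radialIsochronField_eq, smul_sub, smul_add, smul_smul, Finset.sum_sub_distrib,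
    Finset.sum_add_distrib, ← Finset.sum_smul, ← Finset.sum_mul, hρ, one_mul]

def limitCycle (μ θ : ℝ) : EuclideanSpace ℝ (Fin 2) :=
  !₂[Real.sqrt μ * Real.cos θ, Real.sqrt μ * Real.sin θ]

def phaseResponse (μ α θ : ℝ) : EuclideanSpace ℝ (Fin 2) :=
  (1 / Real.sqrt μ) • !₂[-Real.sin θ - α * Real.cos θ, Real.cos θ - α * Real.sin θ]

theorem inner_phaseResponse_limitCycle {μ : ℝ} (hμ : 0 < μ) (α θ : ℝ) :
    ⟪phaseResponse μ α θ, limitCycle μ θ⟫ = -α := by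
  have hs : Real.sqrt μ ≠ 0 := by positivity
  simp only [phaseResponse, limitCycle, one_div, PiLp.inner_apply, PiLp.smul_apply, smul_eq_mul,
    RCLike.inner_apply, Real.ringHom_apply, Fin.sum_univ_two, Matrix.cons_val_zero,
    Matrix.cons_val_one, Matrix.cons_val_fin_one]
  field_simp
  linear_combination -α * Real.sin_sq_add_cos_sq θ

theorem inner_phaseResponse_quarterTurn_limitCycle {μ : ℝ} (hμ : 0 < μ) (α θ : ℝ) :
    ⟪phaseResponse μ α θ, quarterTurn (limitCycle μ θ)⟫ = 1 := by
  have hs : Real.sqrt μ ≠ 0 := by positivity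
  simp only [phaseResponse, limitCycle, quarterTurn, one_div, PiLp.inner_apply, PiLp.smul_apply,
    smul_eq_mul, RCLike.inner_apply, Real.ringHom_apply, Fin.sum_univ_two, Matrix.cons_val_zero,
    Matrix.cons_val_one, Matrix.cons_val_fin_one]
  field_simp
  linear_combination Real.sin_sq_add_cos_sq θ

theorem inner_phaseResponse_radialIsochronField_sub {μbar : ℝ} (hμ : 0 < μbar)
    (μ η ηbar α θ : ℝ) :
    ⟪phaseResponse μbar α θ, radialIsochronField μ η α (limitCycle μbar θ) -
      radialIsochronField μbar ηbar α (limitCycle μbar θ)⟫ = (η - ηbar) - α * (μ - μbar) := by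
  rw [radialIsochronField_sub, inner_add_right, real_inner_smul_right, real_inner_smul_right,
    inner_phaseResponse_limitCycle hμ, inner_phaseResponse_quarterTurn_limitCycle hμ]
  ring

end

theorem switching_radial_isochron_phase_fluctuations_constant_general
    (Γ : Type*) [Fintype Γ]
    (ρ : Γ → ℝ) (hρsum : ∑ n, ρ n = 1)
    (μ η : Γ → ℝ) (α μbar ηbar : ℝ)
    (hμbar : μbar = ∑ n, ρ n * μ n) (hηbar : ηbar = ∑ n, ρ n * η n)
    (hμpos : 0 < μbar)
    (F : Γ → EuclideanSpace ℝ (Fin 2) → EuclideanSpace ℝ (Fin 2))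
    (hF : F = fun n (v : EuclideanSpace ℝ (Fin 2)) =>
      !₂[μ n * v 0 - η n * v 1 - (v 0 ^ 2 + v 1 ^ 2) * (v 0 - α * v 1),
        μ n * v 1 + η n * v 0 - (v 0 ^ 2 + v 1 ^ 2) * (v 1 + α * v 0)])
    (Fbar : EuclideanSpace ℝ (Fin 2) → EuclideanSpace ℝ (Fin 2))
    (hFbar : Fbar = fun (v : EuclideanSpace ℝ (Fin 2)) =>
      !₂[μbar * v 0 - ηbar * v 1 - (v 0 ^ 2 + v 1 ^ 2) * (v 0 - α * v 1),
        μbar * v 1 + ηbar * v 0 - (v 0 ^ 2 + v 1 ^ 2) * (v 1 + α * v 0)])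
    (Φ R : ℝ → EuclideanSpace ℝ (Fin 2))
    (hΦ : Φ = fun θ => !₂[Real.sqrt μbar * Real.cos θ, Real.sqrt μbar * Real.sin θ])
    (hR : R = fun θ => (1 / Real.sqrt μbar) •
      (!₂[-Real.sin θ - α * Real.cos θ, Real.cos θ - α * Real.sin θ] :
        EuclideanSpace ℝ (Fin 2))) :
    (∀ v : EuclideanSpace ℝ (Fin 2), ∑ n, ρ n • F n v = Fbar v) ∧
      (∀ (n : Γ) (θ : ℝ),
        ⟪R θ, F n (Φ θ) - Fbar (Φ θ)⟫ = (η n - ηbar) - α * (μ n - μbar)) ∧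
      (∀ (n : Γ) (θ : ℝ),
        deriv (fun θ' => ⟪R θ', F n (Φ θ') - Fbar (Φ θ')⟫) θ = 0) := by
  replace hF : F = fun n => radialIsochronField (μ n) (η n) α := hF
  replace hFbar : Fbar = radialIsochronField μbar ηbar α := hFbar
  replace hΦ : Φ = limitCycle μbar := hΦ
  replace hR : R = phaseResponse μbar α := hR
  subst hF hFbar hΦ hR
  have hfluct : ∀ (n : Γ) (θ : ℝ),
      ⟪phaseResponse μbar α θ, radialIsochronField (μ n) (η n) α (limitCycle μbar θ) -
        radialIsochronField μbar ηbar α (limitCycle μbar θ)⟫ =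
        (η n - ηbar) - α * (μ n - μbar) :=
    fun n θ => inner_phaseResponse_radialIsochronField_sub hμpos _ _ _ _ θ
  refine ⟨fun v => ?_, hfluct, fun n θ => ?_⟩
  · rw [sum_smul_radialIsochronField _ ρ μ η α hρsum, ← hμbar, ← hηbar]
  · simp only [hfluct, deriv_const]

/-- **Constant phase fluctuation functions for switching radial isochron clocks.**
Let `Γ` be a finite index set, `ρ : Γ → ℝ` nonnegative weights summing to `1`, `μ_n, η_n, α`
real parameters with `μ̄ = ∑ ρ_n μ_n > 0`, `η̄ = ∑ ρ_n η_n`. Let `F_n` be the radial isochron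
clock field with parameters `(μ_n, η_n)`, `F̄` the same expression with `(μ̄, η̄)`,
`Φ θ = (√μ̄ cos θ, √μ̄ sin θ)` and `R θ = (1/√μ̄)(−sin θ − α cos θ, cos θ − α sin θ)`.
Then `F̄ = ∑ ρ_n F_n`, and for every `n` and `θ`,
`⟪R θ, F_n(Φ θ) − F̄(Φ θ)⟫ = (η_n − η̄) − α(μ_n − μ̄) = ω_n − ω̄`; in particular the phase
fluctuation function `ℱ_n(θ) = ⟪R θ, F_n(Φ θ) − F̄(Φ θ)⟫` is constant, so `ℱ_n' ≡ 0`. -/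
theorem switching_radial_isochron_phase_fluctuations_constant
    (Γ : Type*) [Fintype Γ]
    (ρ : Γ → ℝ) (hρ : ∀ n, 0 ≤ ρ n) (hρsum : ∑ n, ρ n = 1)
    (μ η : Γ → ℝ) (α μbar ηbar : ℝ)
    (hμbar : μbar = ∑ n, ρ n * μ n) (hηbar : ηbar = ∑ n, ρ n * η n)
    (hμpos : 0 < μbar)
    (F : Γ → EuclideanSpace ℝ (Fin 2) → EuclideanSpace ℝ (Fin 2))
    (hF : F = fun n (v : EuclideanSpace ℝ (Fin 2)) =>
      !₂[μ n * v 0 - η n * v 1 - (v 0 ^ 2 + v 1 ^ 2) * (v 0 - α * v 1),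
        μ n * v 1 + η n * v 0 - (v 0 ^ 2 + v 1 ^ 2) * (v 1 + α * v 0)])
    (Fbar : EuclideanSpace ℝ (Fin 2) → EuclideanSpace ℝ (Fin 2))
    (hFbar : Fbar = fun (v : EuclideanSpace ℝ (Fin 2)) =>
      !₂[μbar * v 0 - ηbar * v 1 - (v 0 ^ 2 + v 1 ^ 2) * (v 0 - α * v 1),
        μbar * v 1 + ηbar * v 0 - (v 0 ^ 2 + v 1 ^ 2) * (v 1 + α * v 0)])
    (Φ R : ℝ → EuclideanSpace ℝ (Fin 2))
    (hΦ : Φ = fun θ => !₂[Real.sqrt μbar * Real.cos θ, Real.sqrt μbar * Real.sin θ])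
    (hR : R = fun θ => (1 / Real.sqrt μbar) •
      (!₂[-Real.sin θ - α * Real.cos θ, Real.cos θ - α * Real.sin θ] :
        EuclideanSpace ℝ (Fin 2))) :
    (∀ v : EuclideanSpace ℝ (Fin 2), ∑ n, ρ n • F n v = Fbar v) ∧
      (∀ (n : Γ) (θ : ℝ),
        ⟪R θ, F n (Φ θ) - Fbar (Φ θ)⟫ = (η n - ηbar) - α * (μ n - μbar)) ∧
      (∀ (n : Γ) (θ : ℝ),
        deriv (fun θ' => ⟪R θ', F n (Φ θ') - Fbar (Φ θ')⟫) θ = 0) :=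
  switching_radial_isochron_phase_fluctuations_constant_general Γ ρ hρsum μ η α μbar ηbar hμbar
    hηbar hμpos F hF Fbar hFbar Φ R hΦ hR
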